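/- arXiv:1803.00112 — 8 statements merged into one kernel-verified Lean document; each statement's English description precedes it below -/
import Mathlib

section
/- Let y : ℝ^N → ℝ^N be continuously differentiable with y(0) = 0, let J denote its Jacobian matrix at 0, and let w_1,…,w_N be positive reals. If x^T diag(w_1,…,w_N) J x < 0 for every nonzero x ∈ ℝ^N, then there exists ε > 0 such that Σ_{i=1}^{N} w_i p_i y_i(p) < 0 for every p ∈ ℝ^N with 0 < ‖p‖ < ε. -/
/-!
Write `Q x = B x (f x)` where `B u v = ∑ i, w i * u i * v i` and `f = Dy(0)`. Being negative on
the compact unit sphere and homogeneous of degree two, `Q` satisfies `Q x ≤ -c ‖x‖²` for some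
`c > 0`. Since `y 0 = 0`, the difference `B x (y x) - Q x = B x (y x - f x)` is `o(‖x‖²)`, so it
cannot compensate `-c ‖x‖²` near the origin.
-/

open Filter Topology Asymptotics

theorem eventually_le_of_isLittleO_norm_sq {α E : Type*} [SeminormedAddCommGroup E]
    {l : Filter α} {g : α → E} {φ Q : α → ℝ} {c : ℝ} (hc : 0 < c)
    (hQ : ∀ a, Q a ≤ -c * ‖g a‖ ^ 2)
    (hφ : (fun a => φ a - Q a) =o[l] fun a => ‖g a‖ ^ 2) :
    ∀ᶠ a in l, φ a ≤ -(c / 2) * ‖g a‖ ^ 2 := by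
  filter_upwards [hφ.def (half_pos hc)] with a ha
  simp only [Real.norm_eq_abs, abs_pow, abs_norm] at ha
  linarith [(le_abs_self _).trans ha, hQ a]

section

variable {E : Type*} [NormedAddCommGroup E] [NormedSpace ℝ E]

theorem exists_le_neg_mul_norm_sq_of_homogeneous [ProperSpace E] {Q : E → ℝ}
    (hQ : Continuous Q) (hhom : ∀ (t : ℝ) (x : E), Q (t • x) = t ^ 2 * Q x)
    (hneg : ∀ x, x ≠ 0 → Q x < 0) : ∃ c > 0, ∀ x, Q x ≤ -c * ‖x‖ ^ 2 := by
  have hQ0 : Q 0 = 0 := by simpa using hhom 0 0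
  cases subsingleton_or_nontrivial E
  · exact ⟨1, one_pos, fun x => by simp [Subsingleton.elim x 0, hQ0]⟩
  obtain ⟨u, hu, hmax⟩ := (isCompact_sphere (0 : E) 1).exists_isMaxOn
    (NormedSpace.sphere_nonempty.2 zero_le_one) hQ.continuousOn
  have hu0 : u ≠ 0 := ne_zero_of_mem_unit_sphere ⟨u, hu⟩
  refine ⟨-Q u, neg_pos.2 (hneg u hu0), fun x => ?_⟩
  rcases eq_or_ne x 0 with rfl | hx
  · simp [hQ0]
  have hxn : 0 < ‖x‖ := norm_pos_iff.2 hx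
  have hmem : ‖x‖⁻¹ • x ∈ Metric.sphere (0 : E) 1 := by
    simp [norm_smul, hxn.ne']
  calc Q x = ‖x‖ ^ 2 * Q (‖x‖⁻¹ • x) := by
        rw [hhom, ← mul_assoc, ← mul_pow, mul_inv_cancel₀ hxn.ne', one_pow, one_mul]
    _ ≤ ‖x‖ ^ 2 * Q u := by gcongr; exact hmax hmem
    _ = - -Q u * ‖x‖ ^ 2 := by ring

variable {F : Type*} [NormedAddCommGroup F] [NormedSpace ℝ F]

theorem isLittleO_apply_sub_apply_fderiv (B : E →L[ℝ] F →L[ℝ] ℝ) {y : E → F}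
    {f : E →L[ℝ] F} (hy : HasFDerivAt y f 0) (hy0 : y 0 = 0) :
    (fun x => B x (y x) - B x (f x)) =o[𝓝 0] fun x => ‖x‖ ^ 2 := by
  have hrem : (fun x => y x - f x) =o[𝓝 0] fun x => x := by
    simpa [hy0] using hasFDerivAt_iff_isLittleO_nhds_zero.1 hy
  have hbil : (fun x => B x (y x - f x)) =O[𝓝 0] fun x => ‖x‖ * ‖y x - f x‖ :=
    B.isBoundedBilinearMap.isBigO_comp
  simpa [sq, map_sub] using hbil.trans_isLittleO ((isBigO_refl _ _).mul_isLittleO hrem.norm_norm)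

theorem eventually_apply_lt_zero_of_hasFDerivAt [ProperSpace E] (B : E →L[ℝ] F →L[ℝ] ℝ)
    {y : E → F} {f : E →L[ℝ] F} (hy : HasFDerivAt y f 0) (hy0 : y 0 = 0)
    (hneg : ∀ x, x ≠ 0 → B x (f x) < 0) : ∀ᶠ x in 𝓝[≠] 0, B x (y x) < 0 := by
  obtain ⟨c, hc, hQ⟩ := exists_le_neg_mul_norm_sq_of_homogeneous (Q := fun x => B x (f x))
    (by fun_prop) (fun t x => by simp [pow_two, mul_assoc]) hneg
  have hle := eventually_le_of_isLittleO_norm_sq (l := 𝓝[≠] 0) hc hQ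
    ((isLittleO_apply_sub_apply_fderiv B hy hy0).mono nhdsWithin_le_nhds)
  filter_upwards [hle, self_mem_nhdsWithin] with x hx hx0
  have : 0 < c / 2 * ‖x‖ ^ 2 := by have := norm_pos_iff.2 hx0; positivity
  linarith

end

noncomputable def weightedDot {N : ℕ} (w : Fin N → ℝ) :
    (Fin N → ℝ) →L[ℝ] (Fin N → ℝ) →L[ℝ] ℝ :=
  ∑ i, w i • (ContinuousLinearMap.proj i).smulRight (ContinuousLinearMap.proj i)

theorem weightedDot_apply {N : ℕ} (w u v : Fin N → ℝ) :
    weightedDot w u v = ∑ i, w i * u i * v i := by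
  simp [weightedDot, mul_assoc]

theorem weighted_form_negative_near_origin_general
    (N : ℕ) (y : (Fin N → ℝ) → Fin N → ℝ)
    (hy : ContDiff ℝ 1 y) (hy0 : y 0 = 0)
    (w : Fin N → ℝ)
    (hneg : ∀ x : Fin N → ℝ, x ≠ 0 → ∑ i : Fin N, w i * x i * fderiv ℝ y 0 x i < 0) :
    ∃ ε > (0 : ℝ), ∀ p : Fin N → ℝ, 0 < ‖p‖ → ‖p‖ < ε →
      ∑ i : Fin N, w i * p i * y p i < 0 := by
  have hderiv : HasFDerivAt y (fderiv ℝ y 0) 0 := (hy.differentiable one_ne_zero 0).hasFDerivAt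
  have hev := eventually_apply_lt_zero_of_hasFDerivAt (weightedDot w) hderiv hy0
    (by simpa only [weightedDot_apply] using hneg)
  obtain ⟨ε, hε, hball⟩ := Metric.eventually_nhds_iff.1 (eventually_nhdsWithin_iff.1 hev)
  refine ⟨ε, hε, fun p hp hpε => ?_⟩
  simpa only [weightedDot_apply] using
    hball (by simpa using hpε) (by simpa [norm_pos_iff] using hp)

/-- Key estimate for the extinction-of-cooperation proposition: if `y : ℝ^N → ℝ^N` is
continuously differentiable with `y 0 = 0`, `J` is its Jacobian at `0`, and the weighted
quadratic form `x ↦ xᵀ diag(w) J x` (with positive weights `w i`) is negative definite, then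
`∑ i, w i * p i * y p i < 0` for all `p` in a punctured neighborhood of the origin. -/
theorem weighted_form_negative_near_origin
    (N : ℕ) (y : (Fin N → ℝ) → Fin N → ℝ)
    (hy : ContDiff ℝ 1 y) (hy0 : y 0 = 0)
    (w : Fin N → ℝ) (hw : ∀ i, 0 < w i)
    (hneg : ∀ x : Fin N → ℝ, x ≠ 0 → ∑ i : Fin N, w i * x i * fderiv ℝ y 0 x i < 0) :
    ∃ ε > (0 : ℝ), ∀ p : Fin N → ℝ, 0 < ‖p‖ → ‖p‖ < ε →
      ∑ i : Fin N, w i * p i * y p i < 0 :=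
  weighted_form_negative_near_origin_general N y hy hy0 w hneg
end

section
/- (Extinction of cooperation.) Let y : ℝ^N → ℝ^N be continuously differentiable with y(0) = 0 and Jacobian J at 0, and for each i let g_i : [0,1] → ℝ be continuous with g_i(x) > 0 for all x ∈ [0,1]. Consider the dynamics ṗ_i = p_i g_i(p_i) y_i(p) on the cube [0,1]^N. If x^T diag(g_1(0),…,g_N(0)) J x < 0 for every nonzero x ∈ ℝ^N, then the equilibrium p* = 0 is asymptotically stable relative to [0,1]^N: for every neighborhood U of 0 there is a neighborhood V of 0 such that every differentiable solution p : [0,∞) → [0,1]^N of the dynamics with p(0) ∈ V remains in U for all t ≥ 0 and converges to 0 as t → ∞. -/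
/-!
The total cooperation `W = ∑ i, p i` is a Lyapunov function on the cube. Along solutions its
derivative is `∑ i, p i * g i (p i) * y p i`, which differs from the weighted quadratic form
`Q p = ∑ i, g i 0 * p i * (J p) i` by `o(‖p‖²)`, and negative definiteness plus homogeneity give
`Q ≤ -c ‖p‖²`. Hence `Ẇ ≤ -(c/2) ‖p‖² < 0` near `0`, so a solution starting in `{W < ρ}` never
reaches the level `W = ρ`. Below that level `Ẇ ≤ -k W²`, which forces `W → 0`, and `‖p‖ ≤ W`
on the cube.
-/

open Filter Topology Set Finset Asymptotics

section Coercivity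

variable {E : Type*} [NormedAddCommGroup E] [NormedSpace ℝ E] [ProperSpace E]

theorem exists_pos_le_neg_mul_norm_sq {Q : E → ℝ} (hQc : Continuous Q)
    (hQsmul : ∀ (a : ℝ) x, Q (a • x) = a ^ 2 * Q x) (hQneg : ∀ x ≠ 0, Q x < 0) :
    ∃ c > 0, ∀ x, Q x ≤ -c * ‖x‖ ^ 2 := by
  have hQ0 : Q 0 = 0 := by simpa using hQsmul 0 0
  rcases subsingleton_or_nontrivial E with hE | hE
  · exact ⟨1, one_pos, fun x => by simp [Subsingleton.elim x 0, hQ0]⟩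
  obtain ⟨u, hu, hmax⟩ := (isCompact_sphere (0 : E) 1).exists_isMaxOn
    (NormedSpace.sphere_nonempty.2 zero_le_one) hQc.continuousOn
  refine ⟨-Q u, neg_pos.2 (hQneg u (ne_zero_of_mem_unit_sphere ⟨u, hu⟩)), fun x => ?_⟩
  rcases eq_or_ne x 0 with rfl | hx
  · simp [hQ0]
  have hx' : ‖x‖ ≠ 0 := norm_ne_zero_iff.2 hx
  have hunit : ‖x‖⁻¹ • x ∈ Metric.sphere (0 : E) 1 := by
    simp [norm_smul, hx']
  calc Q x = ‖x‖ ^ 2 * Q (‖x‖⁻¹ • x) := by rw [← hQsmul, smul_smul, mul_inv_cancel₀ hx', one_smul]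
    _ ≤ ‖x‖ ^ 2 * Q u := mul_le_mul_of_nonneg_left (hmax hunit) (by positivity)
    _ = - -Q u * ‖x‖ ^ 2 := by ring

end Coercivity

section Drift

variable {ι : Type*} [Fintype ι]

def totalDrift (g : ι → ℝ → ℝ) (y : (ι → ℝ) → ι → ℝ) (x : ι → ℝ) : ℝ :=
  ∑ i, x i * g i (x i) * y x i

def weightedForm (w : ι → ℝ) (J : (ι → ℝ) →L[ℝ] ι → ℝ) (x : ι → ℝ) : ℝ :=
  ∑ i, w i * x i * J x i

theorem continuous_weightedForm (w : ι → ℝ) (J : (ι → ℝ) →L[ℝ] ι → ℝ) :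
    Continuous (weightedForm w J) := by
  unfold weightedForm; fun_prop

theorem weightedForm_smul (w : ι → ℝ) (J : (ι → ℝ) →L[ℝ] ι → ℝ) (a : ℝ) (x : ι → ℝ) :
    weightedForm w J (a • x) = a ^ 2 * weightedForm w J x := by
  simp only [weightedForm, map_smul, Pi.smul_apply, smul_eq_mul, Finset.mul_sum]
  exact sum_congr rfl fun i _ => by ring

theorem totalDrift_sub_weightedForm_isLittleO {y : (ι → ℝ) → ι → ℝ} {J : (ι → ℝ) →L[ℝ] ι → ℝ}
    (hy : HasFDerivAt y J 0) (hy0 : y 0 = 0) {g : ι → ℝ → ℝ}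
    (hg : ∀ i, ContinuousWithinAt (g i) (Icc 0 1) 0) :
    (fun x => totalDrift g y x - weightedForm (fun i => g i 0) J x)
      =o[𝓝[Icc 0 1] 0] fun x => ‖x‖ ^ 2 := by
  set l := 𝓝[Icc (0 : ι → ℝ) 1] 0
  have hyO : y =O[l] fun x => ‖x‖ := by
    simpa [hy0] using (hy.isBigO_sub.mono nhdsWithin_le_nhds).norm_right
  have hyJ : (fun x => y x - J x) =o[l] fun x => ‖x‖ := by
    have := (hasFDerivAt_iff_isLittleO_nhds_zero.1 hy).mono (nhdsWithin_le_nhds (s := Icc 0 1))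
    simpa [hy0] using this.norm_right
  have hgx : ∀ i, (fun x : ι → ℝ => g i (x i) - g i 0) =o[l] fun _ => (1 : ℝ) := by
    refine fun i => (isLittleO_one_iff ℝ).2 (tendsto_sub_nhds_zero_iff.2 ((hg i).tendsto.comp ?_))
    exact tendsto_nhdsWithin_iff.2
      ⟨((continuous_apply i).tendsto' _ _ rfl).mono_left nhdsWithin_le_nhds,
        eventually_mem_nhdsWithin.mono fun x hx => ⟨hx.1 i, hx.2 i⟩⟩
  have hterm : ∀ i, (fun x : ι → ℝ => x i * ((g i (x i) - g i 0) * y x i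
      + g i 0 * (y x i - J x i))) =o[l] fun x => ‖x‖ * ‖x‖ := by
    intro i
    refine (isBigO_pi.1 (isBigO_refl _ _).norm_right i).mul_isLittleO ?_
    have h1 : (fun x => (g i (x i) - g i 0) * y x i) =o[l] fun x => ‖x‖ := by
      simpa using (hgx i).mul_isBigO (isBigO_pi.1 hyO i)
    have h2 : (fun x => g i 0 * (y x i - J x i)) =o[l] fun x => ‖x‖ :=
      (isLittleO_pi.1 hyJ i).const_mul_left _
    exact h1.add h2
  refine (IsLittleO.fun_sum (s := univ) fun i _ => hterm i).congr (fun x => ?_) fun x => (sq _).symm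
  simp only [totalDrift, weightedForm, ← sum_sub_distrib]
  exact sum_congr rfl fun i _ => by ring

theorem eventually_totalDrift_le {y : (ι → ℝ) → ι → ℝ} {J : (ι → ℝ) →L[ℝ] ι → ℝ}
    (hy : HasFDerivAt y J 0) (hy0 : y 0 = 0) {g : ι → ℝ → ℝ}
    (hg : ∀ i, ContinuousWithinAt (g i) (Icc 0 1) 0) {c : ℝ} (hc : 0 < c)
    (hQ : ∀ x, weightedForm (fun i => g i 0) J x ≤ -c * ‖x‖ ^ 2) :
    ∀ᶠ x in 𝓝[Icc 0 1] 0, totalDrift g y x ≤ -(c / 2) * ‖x‖ ^ 2 := by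
  filter_upwards [(totalDrift_sub_weightedForm_isLittleO hy hy0 hg).bound (half_pos hc)]
    with x hx
  rw [Real.norm_eq_abs, norm_pow, norm_norm] at hx
  linarith [le_abs_self (totalDrift g y x - weightedForm (fun i => g i 0) J x), hQ x]

theorem norm_le_sum_of_nonneg {x : ι → ℝ} (hx : 0 ≤ x) : ‖x‖ ≤ ∑ i, x i :=
  (pi_norm_le_iff_of_nonneg (sum_nonneg fun i _ => hx i)).2 fun i => by
    rw [Real.norm_of_nonneg (hx i)]
    exact single_le_sum (fun j _ => hx j) (mem_univ i)

theorem sum_le_card_mul_norm (x : ι → ℝ) : ∑ i, x i ≤ Fintype.card ι * ‖x‖ := by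
  calc ∑ i, x i ≤ ∑ i, ‖x i‖ := sum_le_sum fun i _ => Real.le_norm_self _
    _ ≤ Fintype.card ι * ‖x‖ := by simpa using Pi.sum_norm_apply_le_norm x

end Drift

theorem le_of_hasDerivWithinAt_Ici_of_deriv_neg_at_level {W W' : ℝ → ℝ} {ρ : ℝ}
    (hW : ∀ t ≥ 0, HasDerivWithinAt W (W' t) (Ici 0) t) (h0 : W 0 ≤ ρ)
    (hlevel : ∀ t ≥ 0, W t = ρ → W' t < 0) {t : ℝ} (ht : 0 ≤ t) : W t ≤ ρ :=
  image_le_of_deriv_right_lt_deriv_boundary (B := fun _ => ρ)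
    (fun s hs => (hW s hs.1).continuousWithinAt.mono Icc_subset_Ici_self)
    (fun s hs => (hW s hs.1).mono (Ici_subset_Ici.2 hs.1)) h0 (fun _ => hasDerivAt_const _ ρ)
    (fun s hs => hlevel s hs.1) ⟨ht, le_rfl⟩

theorem tendsto_zero_of_hasDerivWithinAt_Ici_le_neg_mul_sq {W W' : ℝ → ℝ} {k : ℝ} (hk : 0 < k)
    (hW : ∀ t ≥ 0, HasDerivWithinAt W (W' t) (Ici 0) t) (hW0 : ∀ t ≥ 0, 0 ≤ W t)
    (hW' : ∀ t ≥ 0, W' t ≤ -k * W t ^ 2) : Tendsto W atTop (𝓝 0) := by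
  have hcont : ContinuousOn W (Ici 0) := fun t ht => (hW t ht).continuousWithinAt
  have hanti : AntitoneOn W (Ici 0) := by
    refine antitoneOn_of_hasDerivWithinAt_nonpos (f' := W') (convex_Ici 0) hcont ?_ ?_ <;>
      simp only [interior_Ici, Set.mem_Ioi]
    · exact fun t ht => (hW t ht.le).mono Ioi_subset_Ici_self
    · exact fun t ht => by nlinarith [hW' t ht.le, sq_nonneg (W t)]
  have hdrop : ∀ ε > 0, ∃ T ≥ 0, W T < ε := by
    intro ε hε
    -- while `W ≥ ε` it falls at rate at least `k ε²`, so it would be `≤ 0` at time `W 0 / (k ε²)`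
    by_contra! hge
    set m := k * ε ^ 2
    have hm : 0 < m := by positivity
    have hlin := image_le_of_deriv_right_le_deriv_boundary (a := 0) (b := W 0 / m)
      (B := fun t => W 0 - m * t) (B' := fun _ => -m) (hcont.mono Icc_subset_Ici_self)
      (fun s hs => (hW s hs.1).mono (Ici_subset_Ici.2 hs.1)) (by simp) (by fun_prop)
      (fun s _ => by
        simpa using ((hasDerivAt_id s).const_mul m).const_sub (W 0) |>.hasDerivWithinAt)
      (fun s hs => by
        have hε2 := mul_le_mul_of_nonneg_left (pow_le_pow_left₀ hε.le (hge s hs.1) 2) hk.le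
        linarith [hW' s hs.1])
      ⟨by positivity [hW0 0 le_rfl], le_rfl⟩
    have := hge (W 0 / m) (div_nonneg (hW0 0 le_rfl) hm.le)
    rw [mul_div_cancel₀ _ hm.ne'] at hlin
    linarith
  refine Metric.tendsto_atTop.2 fun ε hε => ?_
  obtain ⟨T, hT, hWT⟩ := hdrop ε hε
  refine ⟨T, fun t ht => ?_⟩
  rw [Real.dist_0_eq_abs, abs_of_nonneg (hW0 t (hT.trans ht))]
  exact (hanti hT (hT.trans ht) ht).trans_lt hWT

theorem norm_le_and_tendsto_zero_of_hasDerivWithinAt_sum {ι : Type*} [Fintype ι]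
    {p : ℝ → ι → ℝ} {W' : ℝ → ℝ} {c ρ : ℝ} (hc : 0 < c) (hρ : 0 < ρ) (hp : ∀ t ≥ 0, 0 ≤ p t)
    (hW : ∀ t ≥ 0, HasDerivWithinAt (fun s => ∑ i, p s i) (W' t) (Ici 0) t)
    (hW' : ∀ t ≥ 0, ∑ i, p t i ≤ ρ → W' t ≤ -c * ‖p t‖ ^ 2) (h0 : ∑ i, p 0 i ≤ ρ) :
    (∀ t ≥ 0, ‖p t‖ ≤ ρ) ∧ Tendsto p atTop (𝓝 0) := by
  have htrap : ∀ t ≥ 0, ∑ i, p t i ≤ ρ := by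
    refine fun t ht =>
      le_of_hasDerivWithinAt_Ici_of_deriv_neg_at_level hW h0 (fun s hs hsρ => ?_) ht
    have hps : 0 < ‖p s‖ := norm_pos_iff.2 fun h => by simp [h] at hsρ; linarith
    linarith [hW' s hs hsρ.le, mul_pos hc (pow_pos hps 2)]
  refine ⟨fun t ht => (norm_le_sum_of_nonneg (hp t ht)).trans (htrap t ht), ?_⟩
  -- `+ 1` keeps `n` positive when `ι` is empty
  set n : ℝ := Fintype.card ι + 1
  have hsum : Tendsto (fun t => ∑ i, p t i) atTop (𝓝 0) := by
    refine tendsto_zero_of_hasDerivWithinAt_Ici_le_neg_mul_sq (k := c / n ^ 2) (by positivity) hW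
      (fun t ht => sum_nonneg fun i _ => hp t ht i) fun t ht => ?_
    have hle : ∑ i, p t i ≤ n * ‖p t‖ := by
      linarith [sum_le_card_mul_norm (p t), norm_nonneg (p t)]
    have hsq : (∑ i, p t i) ^ 2 ≤ n ^ 2 * ‖p t‖ ^ 2 := by
      rw [← mul_pow]
      exact pow_le_pow_left₀ (sum_nonneg fun i _ => hp t ht i) hle 2
    have hdecay : c / n ^ 2 * (∑ i, p t i) ^ 2 ≤ c * ‖p t‖ ^ 2 := by
      rw [div_mul_eq_mul_div, div_le_iff₀ (by positivity)]
      nlinarith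
    linarith [hW' t ht (htrap t ht)]
  exact squeeze_zero_norm'
    ((eventually_ge_atTop 0).mono fun t ht => norm_le_sum_of_nonneg (hp t ht)) hsum

theorem extinction_of_cooperation_general
    (N : ℕ) (y : (Fin N → ℝ) → Fin N → ℝ)
    (hy : ContDiff ℝ 1 y) (hy0 : y 0 = 0)
    (g : Fin N → ℝ → ℝ)
    (hgcont : ∀ i, ContinuousOn (g i) (Set.Icc (0 : ℝ) 1))
    (hneg : ∀ x : Fin N → ℝ, x ≠ 0 →
      ∑ i : Fin N, g i 0 * x i * fderiv ℝ y 0 x i < 0) :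
    ∀ U ∈ 𝓝 (0 : Fin N → ℝ), ∃ V ∈ 𝓝 (0 : Fin N → ℝ),
      ∀ p : ℝ → Fin N → ℝ,
        (∀ t ∈ Set.Ici (0 : ℝ), p t ∈ Set.Icc (0 : Fin N → ℝ) 1) →
        (∀ i : Fin N, ∀ t ∈ Set.Ici (0 : ℝ),
          HasDerivWithinAt (fun s => p s i)
            (p t i * g i (p t i) * y (p t) i) (Set.Ici 0) t) →
        p 0 ∈ V →
        (∀ t ∈ Set.Ici (0 : ℝ), p t ∈ U) ∧ Tendsto p atTop (𝓝 0) := by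
  intro U hU
  obtain ⟨c, hc, hQ⟩ := exists_pos_le_neg_mul_norm_sq (continuous_weightedForm _ _)
    (weightedForm_smul _ _) hneg
  obtain ⟨δ, hδ, hdrift⟩ := Metric.mem_nhdsWithin_iff.1 <|
    eventually_totalDrift_le ((hy.differentiable one_ne_zero) 0).hasFDerivAt hy0
      (fun i => hgcont i 0 ⟨le_rfl, zero_le_one⟩) hc hQ
  obtain ⟨ε, hε, hεU⟩ := Metric.mem_nhds_iff.1 hU
  obtain ⟨ρ, hρ, hρδε⟩ := exists_between (lt_min hδ hε)
  have hρδ : ρ < δ := hρδε.trans_le (min_le_left δ ε)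
  have hρε : ρ < ε := hρδε.trans_le (min_le_right δ ε)
  refine ⟨{x | ∑ i, x i < ρ},
    (isOpen_lt (by fun_prop) continuous_const).mem_nhds (by simpa using hρ),
    fun p hp hderiv h0 => ?_⟩
  obtain ⟨hbound, hlim⟩ := norm_le_and_tendsto_zero_of_hasDerivWithinAt_sum (half_pos hc) hρ
    (fun t ht => (hp t ht).1) (fun t ht => HasDerivWithinAt.fun_sum fun i _ => hderiv i t ht)
    (fun t ht hWt => hdrift ⟨mem_ball_zero_iff.2 <|
      (norm_le_sum_of_nonneg (hp t ht).1).trans_lt (hWt.trans_lt hρδ), hp t ht⟩) h0.le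
  exact ⟨fun t ht => hεU (mem_ball_zero_iff.2 ((hbound t ht).trans_lt hρε)), hlim⟩

/-- Extinction of cooperation: for the dynamics `ṗ i = p i * g i (p i) * y i p` on the cube
`[0,1]^N`, where `y` is continuously differentiable with `y 0 = 0` and Jacobian `J` at `0`,
and each `g i` is continuous and positive on `[0,1]`, negative definiteness of the weighted
quadratic form `x ↦ xᵀ diag(g 1 0, …, g N 0) J x` implies that the equilibrium `p* = 0` is
asymptotically stable relative to the cube. -/
theorem extinction_of_cooperation
    (N : ℕ) (y : (Fin N → ℝ) → Fin N → ℝ)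
    (hy : ContDiff ℝ 1 y) (hy0 : y 0 = 0)
    (g : Fin N → ℝ → ℝ)
    (hgcont : ∀ i, ContinuousOn (g i) (Set.Icc (0 : ℝ) 1))
    (hgpos : ∀ i, ∀ x ∈ Set.Icc (0 : ℝ) 1, 0 < g i x)
    (hneg : ∀ x : Fin N → ℝ, x ≠ 0 →
      ∑ i : Fin N, g i 0 * x i * fderiv ℝ y 0 x i < 0) :
    ∀ U ∈ 𝓝 (0 : Fin N → ℝ), ∃ V ∈ 𝓝 (0 : Fin N → ℝ),
      ∀ p : ℝ → Fin N → ℝ,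
        (∀ t ∈ Set.Ici (0 : ℝ), p t ∈ Set.Icc (0 : Fin N → ℝ) 1) →
        (∀ i : Fin N, ∀ t ∈ Set.Ici (0 : ℝ),
          HasDerivWithinAt (fun s => p s i)
            (p t i * g i (p t i) * y (p t) i) (Set.Ici 0) t) →
        p 0 ∈ V →
        (∀ t ∈ Set.Ici (0 : ℝ), p t ∈ U) ∧ Tendsto p atTop (𝓝 0) :=
  extinction_of_cooperation_general N y hy hy0 g hgcont hneg
end

section
/- (Unconditional cooperation.) Let D ⊂ {1,…,N} be a set of unconditional defectors and let 1_{∖D} ∈ [0,1]^N denote the vector with entries 1 for i ∉ D and 0 for i ∈ D. For each i ∉ D let y_i : [0,1]^N → ℝ be continuous and let g_i : [0,1] → ℝ be continuous with g_i(x) > 0 for all x ∈ [0,1]. Consider the dynamics on K = { p ∈ [0,1]^N : p_i = 0 for all i ∈ D } given by ṗ_i = p_i (1 − p_i) g_i(p_i) y_i(p) for i ∉ D. If y_i(1_{∖D}) > 0 for every i ∉ D, then 1_{∖D} is an asymptotically stable equilibrium relative to K: for every relative neighborhood U of 1_{∖D} in K there is a relative neighborhood V such that every differentiable solution p : [0,∞)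 → K with p(0) ∈ V remains in U and converges to 1_{∖D} as t → ∞. -/
/-!
Near `1_{∖D}` the rates `g i (p i) * y i p` of the cooperators are bounded below by half their
positive value at `1_{∖D}`. On a small relative ball around `1_{∖D}` in `K` every cooperator
coordinate therefore has nonnegative speed, so a first-exit argument shows that a trajectory
starting there never leaves: each `p i` is nondecreasing. Inside the ball moreover
`ṗ i ≥ κ i (1 - p i)` with `κ i > 0`, and Grönwall's inequality makes `1 - p i` decay
exponentially.
-/

open Filter Topology Set

theorem monotoneOn_of_hasDerivWithinAt_Ici_nonneg {f f' : ℝ → ℝ} {S : Set ℝ}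
    (hS : Convex ℝ S) (hS₀ : S ⊆ Ici 0)
    (hf : ∀ t ∈ Ici (0 : ℝ), HasDerivWithinAt f (f' t) (Ici 0) t)
    (hf' : ∀ t ∈ interior S, 0 ≤ f' t) : MonotoneOn f S :=
  monotoneOn_of_hasDerivWithinAt_nonneg hS
    (fun t ht => (hf t (hS₀ ht)).continuousWithinAt.mono hS₀)
    (fun t ht => (hf t (hS₀ (interior_subset ht))).mono (interior_subset.trans hS₀)) hf'

theorem monotoneOn_Ici_of_deriv_nonneg_above {ι : Type*} {s : Set ι} (hs : s.Finite)
    {f f' : ι → ℝ → ℝ} {c : ℝ}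
    (hf : ∀ i ∈ s, ∀ t ∈ Ici (0 : ℝ), HasDerivWithinAt (f i) (f' i t) (Ici 0) t)
    (hf' : ∀ t ∈ Ioi (0 : ℝ), (∀ i ∈ s, c < f i t) → ∀ i ∈ s, 0 ≤ f' i t)
    (h₀ : ∀ i ∈ s, c < f i 0) : ∀ i ∈ s, MonotoneOn (f i) (Ici 0) := by
  have hstay : ∀ t ∈ Ici (0 : ℝ), ∀ i ∈ s, c < f i t := by
    by_contra! hexit
    set exits := ⋃ i ∈ s, Ici 0 ∩ f i ⁻¹' Iic c
    have hclosed : IsClosed exits := hs.isClosed_biUnion fun i hi =>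
      ContinuousOn.preimage_isClosed_of_isClosed
        (fun t ht => (hf i hi t ht).continuousWithinAt) isClosed_Ici isClosed_Iic
    have hne : exits.Nonempty := by
      obtain ⟨t, ht, i, hi, hle⟩ := hexit
      exact ⟨t, mem_biUnion hi ⟨ht, hle⟩⟩
    have hbdd : BddBelow exits := ⟨0, by simp +contextual [exits, lowerBounds]⟩
    obtain ⟨i, hi, hT₀, hTc⟩ := mem_iUnion₂.1 (hclosed.csInf_mem hne hbdd)
    have hTpos : 0 < sInf exits :=
      lt_of_le_of_ne hT₀ fun h => (h₀ i hi).not_ge (h ▸ hTc)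
    have hbefore : ∀ t ∈ Ioo 0 (sInf exits), ∀ j ∈ s, c < f j t := fun t ht j hj =>
      not_le.1 fun hle => ht.2.not_ge (csInf_le hbdd (mem_biUnion hj ⟨ht.1.le, hle⟩))
    have hmono : MonotoneOn (f i) (Icc 0 (sInf exits)) :=
      monotoneOn_of_hasDerivWithinAt_Ici_nonneg (convex_Icc _ _) Icc_subset_Ici_self (hf i hi)
        fun t ht => by
          rw [interior_Icc] at ht
          exact hf' t ht.1 (hbefore t ht) i hi
    exact (h₀ i hi).not_ge <|
      (hmono (left_mem_Icc.2 hTpos.le) (right_mem_Icc.2 hTpos.le) hTpos.le).trans hTc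
  intro i hi
  refine monotoneOn_of_hasDerivWithinAt_Ici_nonneg (convex_Ici 0) subset_rfl (hf i hi) ?_
  rw [interior_Ici]
  exact fun t ht => hf' t ht (hstay t (mem_Ici_of_Ioi ht)) i hi

theorem sub_le_mul_exp_of_mul_sub_le_deriv {u u' : ℝ → ℝ} {b κ : ℝ}
    (hu : ∀ t ∈ Ici (0 : ℝ), HasDerivWithinAt u (u' t) (Ici 0) t)
    (hu' : ∀ t ∈ Ici (0 : ℝ), κ * (b - u t) ≤ u' t) :
    ∀ t ∈ Ici (0 : ℝ), b - u t ≤ (b - u 0) * Real.exp (-κ * t) := by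
  intro T hT
  have hw : ∀ t ∈ Ici (0 : ℝ), HasDerivWithinAt (fun s => b - u s) (-u' t) (Ici t) t :=
    fun t ht => ((hu t ht).const_sub b).mono (Ici_subset_Ici.2 ht)
  have := le_gronwallBound_of_liminf_deriv_right_le (f := fun s => b - u s) (f' := fun t => -u' t)
    (δ := b - u 0) (K := -κ) (ε := 0) (a := 0) (b := T)
    (fun t ht => ((hu t ht.1).const_sub b).continuousWithinAt.mono Icc_subset_Ici_self)
    (fun t ht r hr => by simpa [slope_def_module] using (hw t ht.1).liminf_right_slope_le hr)
    le_rfl (fun t ht => by linarith [hu' t ht.1]) T (right_mem_Icc.2 hT)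
  simpa [gronwallBound_ε0] using this

theorem tendsto_of_mul_sub_le_deriv {u u' : ℝ → ℝ} {b κ : ℝ} (hκ : 0 < κ)
    (hu : ∀ t ∈ Ici (0 : ℝ), HasDerivWithinAt u (u' t) (Ici 0) t)
    (hub : ∀ t ∈ Ici (0 : ℝ), u t ≤ b)
    (hu' : ∀ t ∈ Ici (0 : ℝ), κ * (b - u t) ≤ u' t) :
    Tendsto u atTop (𝓝 b) := by
  have hexp : Tendsto (fun t => (b - u 0) * Real.exp (-κ * t)) atTop (𝓝 0) := by
    simpa using (Real.tendsto_exp_atBot.comp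
      (tendsto_id.const_mul_atTop_of_neg (neg_neg_of_pos hκ))).const_mul (b - u 0)
  have hgap : Tendsto (fun t => b - u t) atTop (𝓝 0) :=
    tendsto_of_tendsto_of_tendsto_of_le_of_le' tendsto_const_nhds hexp
      ((eventually_ge_atTop 0).mono fun t ht => sub_nonneg.2 (hub t ht))
      ((eventually_ge_atTop 0).mono (sub_le_mul_exp_of_mul_sub_le_deriv hu hu'))
  simpa using hgap.const_sub b

theorem mul_one_sub_le_mul_one_sub_mul {x a r : ℝ} (hx : 1 / 2 < x) (hx₁ : x ≤ 1)
    (ha : 0 < a) (hr : a / 2 < r) : a / 4 * (1 - x) ≤ x * (1 - x) * r := by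
  have hgap : 0 ≤ 1 - x := sub_nonneg.2 hx₁
  calc a / 4 * (1 - x) = 1 / 2 * (1 - x) * (a / 2) := by ring
    _ ≤ x * (1 - x) * r := by gcongr

section onesOff

variable {ι : Type*} [DecidableEq ι] {D : Finset ι}

def onesOff (D : Finset ι) : ι → ℝ := fun i => if i ∈ D then 0 else 1

theorem onesOff_mem_Icc (D : Finset ι) : onesOff D ∈ Icc (0 : ι → ℝ) 1 :=
  ⟨fun i => by by_cases hi : i ∈ D <;> simp [onesOff, hi],
    fun i => by by_cases hi : i ∈ D <;> simp [onesOff, hi]⟩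

theorem dist_onesOff_lt_iff [Fintype ι] {q : ι → ℝ} (hq : q ≤ 1)
    (hqD : ∀ i ∈ D, q i = 0) {ε : ℝ} (hε : 0 < ε) :
    dist q (onesOff D) < ε ↔ ∀ i ∉ D, 1 - ε < q i := by
  rw [dist_pi_lt_iff hε]
  refine ⟨fun h i hi => ?_, fun h i => ?_⟩
  · have := h i
    simp only [onesOff, hi, if_false, Real.dist_eq, abs_lt] at this
    linarith
  · by_cases hi : i ∈ D
    · simp [onesOff, hi, hqD i hi, hε]
    · have hqi : q i ≤ 1 := hq i
      simp only [onesOff, hi, if_false, Real.dist_eq, abs_lt]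
      constructor <;> linarith [h i hi]

theorem eventually_half_lt_coord_and_rate [Fintype ι]
    {y : ι → (ι → ℝ) → ℝ} {g : ι → ℝ → ℝ}
    (hy : ∀ i ∉ D, ContinuousOn (y i) (Icc 0 1))
    (hg : ∀ i ∉ D, ContinuousOn (g i) (Icc 0 1))
    (hpos : ∀ i ∉ D, 0 < g i 1 * y i (onesOff D)) :
    ∀ᶠ q in 𝓝[Icc 0 1] onesOff D,
      ∀ i ∉ D, 1 / 2 < q i ∧ g i 1 * y i (onesOff D) / 2 < g i (q i) * y i q := by
  refine eventually_all.2 fun i => eventually_imp_distrib_left.2 fun hi => ?_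
  have hi₁ : onesOff D i = 1 := if_neg hi
  have hcoord : ContinuousWithinAt (fun q : ι → ℝ => q i) (Icc 0 1) (onesOff D) :=
    (continuous_apply i).continuousWithinAt
  have hrate : ContinuousWithinAt (fun q => g i (q i) * y i q) (Icc 0 1) (onesOff D) :=
    ((hg i hi 1 (right_mem_Icc.2 zero_le_one)).comp_of_eq hcoord
      (fun q hq => ⟨hq.1 i, hq.2 i⟩) hi₁).mul (hy i hi _ (onesOff_mem_Icc D))
  rw [ContinuousWithinAt, hi₁] at hcoord hrate
  exact (hcoord.eventually_const_lt (by norm_num)).and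
    (hrate.eventually_const_lt (half_lt_self (hpos i hi)))

end onesOff

/-- Unconditional cooperation: with a set `D` of unconditional defectors, consider the
dynamics `ṗ i = p i * (1 - p i) * g i (p i) * y i p` for `i ∉ D` on the set
`K = {p ∈ [0,1]^N : p i = 0 for i ∈ D}`, with `y i` continuous and `g i` continuous and
positive on `[0,1]`.  If `y i (1_{∖D}) > 0` for every `i ∉ D`, then the point `1_{∖D}`
(entries `1` off `D`, `0` on `D`) is an asymptotically stable equilibrium relative to `K`. -/
theorem unconditional_cooperation_stable
    (N : ℕ) (D : Finset (Fin N))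
    (y : Fin N → (Fin N → ℝ) → ℝ)
    (hycont : ∀ i ∉ D, ContinuousOn (y i) (Set.Icc (0 : Fin N → ℝ) 1))
    (g : Fin N → ℝ → ℝ)
    (hgcont : ∀ i ∉ D, ContinuousOn (g i) (Set.Icc (0 : ℝ) 1))
    (hgpos : ∀ i ∉ D, ∀ x ∈ Set.Icc (0 : ℝ) 1, 0 < g i x)
    (onesD : Fin N → ℝ) (honesD : onesD = fun i => if i ∈ D then 0 else 1)
    (K : Set (Fin N → ℝ))
    (hK : K = {q : Fin N → ℝ | q ∈ Set.Icc (0 : Fin N → ℝ) 1 ∧ ∀ i ∈ D, q i = 0})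
    (hpos : ∀ i ∉ D, 0 < y i onesD) :
    ∀ U ∈ 𝓝[K] onesD, ∃ V ∈ 𝓝[K] onesD,
      ∀ p : ℝ → Fin N → ℝ,
        (∀ t ∈ Set.Ici (0 : ℝ), p t ∈ K) →
        (∀ i ∉ D, ∀ t ∈ Set.Ici (0 : ℝ),
          HasDerivWithinAt (fun s => p s i)
            (p t i * (1 - p t i) * g i (p t i) * y i (p t)) (Set.Ici 0) t) →
        p 0 ∈ V →
        (∀ t ∈ Set.Ici (0 : ℝ), p t ∈ U) ∧ Tendsto p atTop (𝓝 onesD) := by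
  obtain rfl : onesD = onesOff D := honesD
  subst hK
  intro U hU
  have hrate₀ : ∀ i ∉ D, 0 < g i 1 * y i (onesOff D) := fun i hi =>
    mul_pos (hgpos i hi 1 (right_mem_Icc.2 zero_le_one)) (hpos i hi)
  obtain ⟨ε, hε, hεU⟩ := Metric.mem_nhdsWithin_iff.1 <| inter_mem hU <|
    nhdsWithin_mono _ (fun q hq => hq.1) (eventually_half_lt_coord_and_rate hycont hgcont hrate₀)
  refine ⟨_ ∩ Metric.ball (onesOff D) ε,
    inter_mem_nhdsWithin _ (Metric.ball_mem_nhds _ hε), ?_⟩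
  rintro p hpK hp ⟨hp₀K, hp₀⟩
  have hnear : ∀ t ∈ Ici (0 : ℝ), (∀ i ∉ D, 1 - ε < p t i) → p t ∈ U ∧ ∀ i ∉ D,
      g i 1 * y i (onesOff D) / 4 * (1 - p t i) ≤
        p t i * (1 - p t i) * g i (p t i) * y i (p t) := by
    intro t ht h
    obtain ⟨htU, hrate⟩ :=
      hεU ⟨(dist_onesOff_lt_iff (hpK t ht).1.2 (hpK t ht).2 hε).2 h, hpK t ht⟩
    refine ⟨htU, fun i hi => ?_⟩
    rw [mul_assoc]
    exact mul_one_sub_le_mul_one_sub_mul (hrate i hi).1 ((hpK t ht).1.2 i) (hrate₀ i hi)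
      (hrate i hi).2
  have h₀ := (dist_onesOff_lt_iff hp₀K.1.2 hp₀K.2 hε).1 hp₀
  have hmono : ∀ i ∉ D, MonotoneOn (fun t => p t i) (Ici 0) :=
    monotoneOn_Ici_of_deriv_nonneg_above (toFinite {i | i ∉ D}) hp (fun t ht hc i hi =>
      have ht₀ : t ∈ Ici 0 := mem_Ici_of_Ioi ht
      (mul_nonneg (by linarith [hrate₀ i hi]) (sub_nonneg.2 ((hpK t ht₀).1.2 i))).trans
        ((hnear t ht₀ hc).2 i hi)) h₀
  have hstay : ∀ t ∈ Ici (0 : ℝ), ∀ i ∉ D, 1 - ε < p t i := fun t ht i hi =>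
    (h₀ i hi).trans_le (hmono i hi self_mem_Ici ht ht)
  refine ⟨fun t ht => (hnear t ht (hstay t ht)).1, tendsto_pi_nhds.2 fun i => ?_⟩
  by_cases hi : i ∈ D
  · rw [show onesOff D i = 0 from if_pos hi]
    exact tendsto_const_nhds.congr' <|
      (eventually_ge_atTop 0).mono fun t ht => ((hpK t ht).2 i hi).symm
  · rw [show onesOff D i = 1 from if_neg hi]
    exact tendsto_of_mul_sub_le_deriv (by linarith [hrate₀ i hi]) (hp i hi)
      (fun t ht => (hpK t ht).1.2 i) fun t ht => (hnear t ht (hstay t ht)).2 i hi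
end

section
/- Consider the networked snowdrift game with benefit b_i(p) = Σ_j A_{ij} [β p_j + β p_i + p_i (γ/2 − β) p_j] and cost c_i(p_i) = γ d_i p_i on [0,1]^N. If β > γ/2 > 0, then for every p̂ ∈ [0,1]^N and every i, Σ_j ∂b_j/∂p_i(p̂) ≥ c_i′(p̂_i) = γ d_i, with strict inequality at p̂ = 0; i.e., condition (3) of a social dilemma is satisfied whenever β > γ/2. -/
/-!
With `μ = γ/2 - β`, the benefit `b_j` is quadratic and
`∂b_j/∂p_i = A j i (β + μ p_j) + [j = i] ∑ₖ A i k (β + μ p_k)`, so by symmetry of `A` the total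
marginal benefit of player `i` is `2 ∑ₖ A i k (β + μ p_k)`. Each factor
`β + μ p_k = (1 - p_k) β + p_k γ/2` is at least `γ/2` when `p_k ≤ 1` and equals `β > γ/2` at
`p = 0`; summing against `d i = ∑ₖ A i k` gives both claims.
-/

open Finset

section Snowdrift

variable {ι : Type*} [Fintype ι] (A : ι → ι → ℝ) (β μ : ℝ)

def snowdriftBenefit (j : ι) (p : ι → ℝ) : ℝ :=
  ∑ k, A j k * (β * p k + β * p j + p j * μ * p k)

theorem fderiv_snowdriftBenefit_apply (j : ι) (p v : ι → ℝ) :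
    fderiv ℝ (snowdriftBenefit A β μ j) p v =
      (β + μ * p j) * ∑ k, A j k * v k + v j * ∑ k, A j k * (β + μ * p k) := by
  have hproj (k : ι) : HasFDerivAt (fun q : ι → ℝ => q k) (ContinuousLinearMap.proj k) p :=
    (ContinuousLinearMap.proj (R := ℝ) (φ := fun _ : ι => ℝ) k).hasFDerivAt
  have h : HasFDerivAt (snowdriftBenefit A β μ j) _ p := HasFDerivAt.fun_sum (u := univ) fun k _ =>
    ((((hproj k).const_mul β).add ((hproj j).const_mul β)).add
      (((hproj j).mul_const μ).mul (hproj k))).const_mul (A j k)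
  rw [h.fderiv]
  simp only [_root_.sum_apply, FunLike.coe_smul, FunLike.coe_add, Pi.smul_apply, Pi.add_apply,
    ContinuousLinearMap.proj_apply, smul_eq_mul, mul_sum, ← sum_add_distrib]
  refine sum_congr rfl fun k _ => ?_
  ring

theorem sum_fderiv_snowdriftBenefit_single [DecidableEq ι] (hA : ∀ i j, A i j = A j i)
    (i : ι) (p : ι → ℝ) :
    ∑ j, fderiv ℝ (snowdriftBenefit A β μ j) p (Pi.single i 1) =
      2 * ∑ k, A i k * (β + μ * p k) := by
  simp only [fderiv_snowdriftBenefit_apply, Pi.single_apply, mul_ite, mul_one, mul_zero, ite_mul,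
    one_mul, zero_mul, sum_ite_eq', mem_univ, if_true, sum_add_distrib, hA _ i]
  rw [two_mul]
  exact congrArg (· + _) (sum_congr rfl fun k _ => mul_comm _ _)

theorem mul_sum_le_sum_mul_add_sub_mul {a x : ι → ℝ} {c : ℝ} (ha : ∀ k, 0 ≤ a k) (hc : c ≤ β)
    (hx : ∀ k, x k ≤ 1) :
    c * ∑ k, a k ≤ ∑ k, a k * (β + (c - β) * x k) := by
  rw [mul_sum]
  refine sum_le_sum fun k _ => ?_
  nlinarith [mul_nonneg (ha k) (mul_nonneg (sub_nonneg.2 hc) (sub_nonneg.2 (hx k)))]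

end Snowdrift


theorem snowdrift_condition3_general
    (N : ℕ)
    (A : Fin N → Fin N → ℝ) (hA01 : ∀ i j, A i j = 0 ∨ A i j = 1)
    (hAsymm : ∀ i j, A i j = A j i)
    (d : Fin N → ℝ) (hd : ∀ i, d i = ∑ j : Fin N, A i j) (hdpos : ∀ i, 0 < d i)
    (β γ : ℝ) (hβ : β > γ / 2)
    (b : Fin N → (Fin N → ℝ) → ℝ) (c : Fin N → ℝ → ℝ)
    (hb : ∀ i, b i = fun p =>
      ∑ j : Fin N, A i j * (β * p j + β * p i + p i * (γ / 2 - β) * p j))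
    (hc : ∀ i, c i = fun x => γ * d i * x) :
    (∀ phat ∈ Set.Icc (0 : Fin N → ℝ) 1, ∀ i : Fin N,
      deriv (c i) (phat i) = γ * d i ∧
      ∑ j : Fin N, fderiv ℝ (b j) phat (Pi.single i 1) ≥ γ * d i) ∧
    (∀ i : Fin N,
      ∑ j : Fin N, fderiv ℝ (b j) (0 : Fin N → ℝ) (Pi.single i 1) > γ * d i) := by
  have hb' : b = snowdriftBenefit A β (γ / 2 - β) := funext hb
  subst hb'
  have hA_nonneg (i k : Fin N) : 0 ≤ A i k := (hA01 i k).elim (·.ge) fun h => h ▸ zero_le_one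
  refine ⟨fun p hp i => ⟨?_, ?_⟩, fun i => ?_⟩
  · simp [hc]
  · rw [sum_fderiv_snowdriftBenefit_single A β _ hAsymm, hd i, ge_iff_le]
    linarith [mul_sum_le_sum_mul_add_sub_mul β (hA_nonneg i) hβ.le fun k => hp.2 k]
  · have hdi := hdpos i
    rw [hd i] at hdi ⊢
    simp only [sum_fderiv_snowdriftBenefit_single A β _ hAsymm, Pi.zero_apply, mul_zero, add_zero,
      ← sum_mul]
    nlinarith

/-- In the networked snowdrift game with benefit
`b i p = ∑ j, A i j * (β p j + β p i + p i (γ/2 - β) p j)` and cost `c i x = γ * d i * x`,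
if `β > γ/2 > 0` then condition (3) of the social dilemma holds everywhere on the cube:
`∑ j, ∂b_j/∂p_i (phat) ≥ c_i'(phat i) = γ d i`, with strict inequality at `phat = 0`. -/
theorem snowdrift_condition3
    (N : ℕ)
    (A : Fin N → Fin N → ℝ) (hA01 : ∀ i j, A i j = 0 ∨ A i j = 1)
    (hAsymm : ∀ i j, A i j = A j i) (hAdiag : ∀ i, A i i = 0)
    (d : Fin N → ℝ) (hd : ∀ i, d i = ∑ j : Fin N, A i j) (hdpos : ∀ i, 0 < d i)
    (β γ : ℝ) (hγ : 0 < γ / 2) (hβ : β > γ / 2)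
    (b : Fin N → (Fin N → ℝ) → ℝ) (c : Fin N → ℝ → ℝ)
    (hb : ∀ i, b i = fun p =>
      ∑ j : Fin N, A i j * (β * p j + β * p i + p i * (γ / 2 - β) * p j))
    (hc : ∀ i, c i = fun x => γ * d i * x) :
    (∀ phat ∈ Set.Icc (0 : Fin N → ℝ) 1, ∀ i : Fin N,
      deriv (c i) (phat i) = γ * d i ∧
      ∑ j : Fin N, fderiv ℝ (b j) phat (Pi.single i 1) ≥ γ * d i) ∧
    (∀ i : Fin N,
      ∑ j : Fin N, fderiv ℝ (b j) (0 : Fin N → ℝ) (Pi.single i 1) > γ * d i) :=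
  snowdrift_condition3_general N A hA01 hAsymm d hd hdpos β γ hβ b c hb hc
end

section
/- Consider the networked snowdrift game with benefit b_i(p) = Σ_j A_{ij} [β p_j + β p_i + p_i (γ/2 − β) p_j] and cost c_i(p_i) = γ d_i p_i. Let D ⊆ {1,…,N} be any set of unconditional defectors and let 1_{∖D} denote the vector with entries 1 for j ∉ D and 0 for j ∈ D. If β > γ > 0, then for every i ∉ D one has b_i(1_{∖D}) > c_i(1), i.e. the cooperation index v_i^{∖D} = b_i(1_{∖D})/(γ d_i) exceeds 1; hence the condition for unconditional cooperation by the state-based individuals holds regardless of the set of defectors. -/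
/-- In the networked snowdrift game with benefit
`b i p = ∑ j, A i j * (β p j + β p i + p i (γ/2 - β) p j)` and cost `c i x = γ * d i * x`,
if `β > γ > 0` then for any set `D` of unconditional defectors and any `i ∉ D`, the benefit
at the point `1_{∖D}` exceeds the cost at `1`, i.e. the cooperation index
`v i = b i (1_{∖D}) / (γ d i)` exceeds `1`, independently of the structure of `D`. -/
theorem snowdrift_unconditional_cooperation_index
    (N : ℕ)
    (A : Fin N → Fin N → ℝ) (hA01 : ∀ i j, A i j = 0 ∨ A i j = 1)
    (hAsymm : ∀ i j, A i j = A j i) (hAdiag : ∀ i, A i i = 0)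
    (d : Fin N → ℝ) (hd : ∀ i, d i = ∑ j : Fin N, A i j) (hdpos : ∀ i, 0 < d i)
    (β γ : ℝ) (hγ : 0 < γ) (hβ : β > γ)
    (b : Fin N → (Fin N → ℝ) → ℝ) (c : Fin N → ℝ → ℝ)
    (hb : ∀ i, b i = fun p =>
      ∑ j : Fin N, A i j * (β * p j + β * p i + p i * (γ / 2 - β) * p j))
    (hc : ∀ i, c i = fun x => γ * d i * x)
    (D : Finset (Fin N))
    (onesD : Fin N → ℝ) (honesD : onesD = fun j => if j ∈ D then 0 else 1) :
    ∀ i ∉ D, b i onesD > c i 1 ∧ b i onesD / (γ * d i) > 1 := by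
  intro i hi
  have key : b i onesD ≥ β * d i := by
    rw [hb, honesD, hd]
    simp only
    rw [Finset.mul_sum]
    apply Finset.sum_le_sum
    intro j _
    have hpi : (if i ∈ D then (0:ℝ) else 1) = 1 := by simp [hi]
    rcases hA01 i j with h0 | h1
    · simp [h0]
    · rw [h1, hpi]
      by_cases hj : j ∈ D <;> simp [hj] <;> linarith
  have hgd : γ * d i < β * d i := by
    have := hdpos i
    nlinarith
  have h1 : b i onesD > c i 1 := by
    rw [hc]; simpa using lt_of_lt_of_le hgd key
  refine ⟨h1, ?_⟩
  rw [gt_iff_lt, lt_div_iff₀ (mul_pos hγ (hdpos i))]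
  have := h1
  rw [hc] at this
  simpa using this
end

section
/- Consider the common-pool resource payoff on [0,1]^N obtained by substituting the equilibrium resource R*(p) = N / Σ_j (1 − δ p_j): benefit b_i(p) = (1 − δ p_i)(N / Σ_j (1 − δ p_j) − 1) and cost c_i(p_i) = γ p_i, where 0 < δ < 1 and γ > 0. Then for every p̂ ∈ [0,1]^N and every i, Σ_{j=1}^{N} ∂b_j/∂p_i(p̂) = δ; consequently condition (3), Σ_j ∂b_j/∂p_i(p̂) ≥ c_i′(p̂_i), holds at every p̂ ∈ [0,1]^N if and only if δ ≥ γ. -/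
/-!
Summing the benefits over all individuals makes the equilibrium resource cancel:
`∑ j, b_j p = (∑ j, (1 - δ p_j)) * (N / ∑ j, (1 - δ p_j) - 1) = N - ∑ j, (1 - δ p_j)`
wherever the total harvest is nonzero, which holds near every point of the cube. Hence
`∑ j, ∂b_j/∂p_i` is the partial derivative of an affine function, namely `δ`, while `c_i' = γ`.
-/

open Set Filter Topology

namespace CommonPool

variable {ι : Type*} [Fintype ι]

/-- The equilibrium resource is `R* = N / totalHarvest δ p`. -/
def totalHarvest (δ : ℝ) (p : ι → ℝ) : ℝ := ∑ j, (1 - δ * p j)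

noncomputable def benefit (n δ : ℝ) (i : ι) (p : ι → ℝ) : ℝ :=
  (1 - δ * p i) * (n / totalHarvest δ p - 1)

theorem totalHarvest_pos [Nonempty ι] {δ : ℝ} (hδ : δ < 1) {p : ι → ℝ} (hp : p ∈ Icc 0 1) :
    0 < totalHarvest δ p := by
  refine Finset.sum_pos (fun j _ => ?_) Finset.univ_nonempty
  have hp0 : 0 ≤ p j := hp.1 j
  have hp1 : p j ≤ 1 := hp.2 j
  rcases le_or_gt δ 0 with hδ0 | hδ0 <;> nlinarith

theorem sum_benefit {n δ : ℝ} {p : ι → ℝ} (h : totalHarvest δ p ≠ 0) :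
    ∑ i, benefit n δ i p = n - totalHarvest δ p := by
  unfold benefit
  rw [← Finset.sum_mul, ← totalHarvest]
  field_simp

theorem hasFDerivAt_totalHarvest (δ : ℝ) (p : ι → ℝ) :
    HasFDerivAt (totalHarvest δ)
      (∑ j, -(δ • ContinuousLinearMap.proj (R := ℝ) (φ := fun _ : ι => ℝ) j)) p :=
  HasFDerivAt.fun_sum fun j _ => ((hasFDerivAt_apply j p).const_mul δ).const_sub 1

theorem fderiv_totalHarvest_single [DecidableEq ι] (δ : ℝ) (p : ι → ℝ) (i : ι) :
    fderiv ℝ (totalHarvest δ) p (Pi.single i 1) = -δ := by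
  simp [(hasFDerivAt_totalHarvest δ p).fderiv, Pi.single_apply]

theorem differentiableAt_benefit {n δ : ℝ} {p : ι → ℝ} (h : totalHarvest δ p ≠ 0) (i : ι) :
    DifferentiableAt ℝ (benefit n δ i) p := by
  have hT : DifferentiableAt ℝ (totalHarvest δ) p :=
    (hasFDerivAt_totalHarvest δ p).differentiableAt
  unfold benefit
  fun_prop (disch := exact h)

theorem sum_fderiv_benefit_single [DecidableEq ι] {n δ : ℝ} {p : ι → ℝ}
    (h : totalHarvest δ p ≠ 0) (i : ι) :
    ∑ j, fderiv ℝ (benefit n δ j) p (Pi.single i 1) = δ := by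
  have hsum : (fun q => ∑ j, benefit n δ j q) =ᶠ[𝓝 p] fun q => n - totalHarvest δ q :=
    ((hasFDerivAt_totalHarvest δ p).continuousAt.eventually_ne h).mono fun q hq => sum_benefit hq
  rw [← sum_apply,
    ← fderiv_fun_sum fun j _ => differentiableAt_benefit h j, hsum.fderiv_eq, fderiv_const_sub,
    neg_apply, fderiv_totalHarvest_single, neg_neg]

end CommonPool

open CommonPool in
theorem common_pool_resource_condition3_general
    (N : ℕ) (hN : 0 < N)
    (δ γ : ℝ) (hδ1 : δ < 1)
    (b : Fin N → (Fin N → ℝ) → ℝ) (c : Fin N → ℝ → ℝ)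
    (hb : ∀ i, b i = fun p =>
      (1 - δ * p i) * ((N : ℝ) / (∑ j : Fin N, (1 - δ * p j)) - 1))
    (hc : ∀ i, c i = fun x => γ * x) :
    (∀ phat ∈ Set.Icc (0 : Fin N → ℝ) 1, ∀ i : Fin N,
      ∑ j : Fin N, fderiv ℝ (b j) phat (Pi.single i 1) = δ) ∧
    ((∀ phat ∈ Set.Icc (0 : Fin N → ℝ) 1, ∀ i : Fin N,
      ∑ j : Fin N, fderiv ℝ (b j) phat (Pi.single i 1) ≥ deriv (c i) (phat i))
      ↔ δ ≥ γ) := by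
  have : Nonempty (Fin N) := Fin.pos_iff_nonempty.mp hN
  obtain rfl : b = benefit (N : ℝ) δ := funext hb
  have hderiv_c : ∀ i x, deriv (c i) x = γ := fun i x => by
    rw [hc i]
    simp
  have hsum : ∀ phat ∈ Icc (0 : Fin N → ℝ) 1, ∀ i : Fin N,
      ∑ j, fderiv ℝ (benefit (N : ℝ) δ j) phat (Pi.single i 1) = δ := fun phat hp i =>
    sum_fderiv_benefit_single (totalHarvest_pos hδ1 hp).ne' i
  have hzero : (0 : Fin N → ℝ) ∈ Icc 0 1 := ⟨le_rfl, zero_le_one⟩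
  refine ⟨hsum, fun h => ?_, fun h phat hp i => ?_⟩
  · have := h 0 hzero ⟨0, hN⟩
    rwa [hsum 0 hzero, hderiv_c] at this
  · rwa [hsum phat hp, hderiv_c]

/-- In the common-pool resource problem with equilibrium resource
`R*(p) = N / ∑ j (1 - δ p j)`, benefit `b i p = (1 - δ p i) * (N / ∑ j (1 - δ p j) - 1)` and
cost `c i x = γ x` (`0 < δ < 1`, `γ > 0`), for every point `phat` of the cube
`∑ j, ∂b_j/∂p_i (phat) = δ`; consequently condition (3) holds everywhere on the cube
if and only if `δ ≥ γ`. -/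
theorem common_pool_resource_condition3
    (N : ℕ) (hN : 0 < N)
    (δ γ : ℝ) (hδ0 : 0 < δ) (hδ1 : δ < 1) (hγ : 0 < γ)
    (b : Fin N → (Fin N → ℝ) → ℝ) (c : Fin N → ℝ → ℝ)
    (hb : ∀ i, b i = fun p =>
      (1 - δ * p i) * ((N : ℝ) / (∑ j : Fin N, (1 - δ * p j)) - 1))
    (hc : ∀ i, c i = fun x => γ * x) :
    (∀ phat ∈ Set.Icc (0 : Fin N → ℝ) 1, ∀ i : Fin N,
      ∑ j : Fin N, fderiv ℝ (b j) phat (Pi.single i 1) = δ) ∧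
    ((∀ phat ∈ Set.Icc (0 : Fin N → ℝ) 1, ∀ i : Fin N,
      ∑ j : Fin N, fderiv ℝ (b j) phat (Pi.single i 1) ≥ deriv (c i) (phat i))
      ↔ δ ≥ γ) :=
  common_pool_resource_condition3_general N hN δ γ hδ1 b c hb hc
end

section
/- Let z_i = Σ_j A_{ji}/d_j. For the coupled public-goods–donation payoff with ε ∈ (0,1] and α > 0, the partial derivatives are constant in p: ∂b_i/∂p_i(p̂) = ε α z_i / d_i and Σ_j ∂b_j/∂p_i(p̂) = α for every p̂ ∈ [0,1]^N. Consequently, the social dilemma conditions for individual i — namely ∂b_i/∂p_i(p̂) < c_i′(p̂_i) for all p̂, and Σ_j ∂b_j/∂p_i(p̂) ≥ c_i′(p̂_i) for all p̂ with strict inequality at p̂ = 0 — hold if and only if 1 < α < d_i/(ε z_i). -/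
lemma fderiv_linsum {N : ℕ} (w : Fin N → ℝ) (p : Fin N → ℝ) (i : Fin N) :
    fderiv ℝ (fun q : Fin N → ℝ => ∑ k, w k * q k) p (Pi.single i 1) = w i := by
  have hL : (fun q : Fin N → ℝ => ∑ k, w k * q k) =
      ⇑(∑ k, w k • (ContinuousLinearMap.proj k : (Fin N → ℝ) →L[ℝ] ℝ)) := by
    funext q
    simp [ContinuousLinearMap.sum_apply]
  rw [hL, ContinuousLinearMap.fderiv]
  simp [ContinuousLinearMap.sum_apply, Pi.single_apply, mul_ite, Finset.sum_ite_eq']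

/-- For the coupled public-goods–donation payoff with benefit
`b i p = εα ∑ j (A j i / d j) ∑ k (A k j / d k) p k + (1-ε)α ∑_{k≠i} (A k i/(d k - 1)) p k`
and cost `c i x = x`, the partial derivatives are constant in `p`:
`∂b_i/∂p_i = εα z i / d i` and `∑ j ∂b_j/∂p_i = α`, where `z i = ∑ j A j i / d j`;
and the social dilemma conditions for individual `i` hold iff `1 < α < d i / (ε z i)`. -/
theorem public_goods_donation_dilemma
    (N : ℕ)
    (A : Fin N → Fin N → ℝ) (hA01 : ∀ i j, A i j = 0 ∨ A i j = 1)
    (hAsymm : ∀ i j, A i j = A j i) (hAdiag : ∀ i, A i i = 1)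
    (d : Fin N → ℝ) (hd : ∀ i, d i = ∑ j : Fin N, A i j) (hd2 : ∀ i, 2 ≤ d i)
    (α ε : ℝ) (hα : 0 < α) (hε : 0 < ε) (hε1 : ε ≤ 1)
    (z : Fin N → ℝ) (hz : ∀ i, z i = ∑ j : Fin N, A j i / d j)
    (b : Fin N → (Fin N → ℝ) → ℝ) (c : Fin N → ℝ → ℝ)
    (hb : ∀ i, b i = fun p =>
      ε * α * ∑ j : Fin N, (A j i / d j) * ∑ k : Fin N, (A k j / d k) * p k
        + (1 - ε) * α * ∑ k ∈ Finset.univ.erase i, (A k i / (d k - 1)) * p k)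
    (hc : ∀ i, c i = fun x => x) :
    ∀ i : Fin N,
      (∀ phat ∈ Set.Icc (0 : Fin N → ℝ) 1,
        fderiv ℝ (b i) phat (Pi.single i 1) = ε * α * z i / d i ∧
        ∑ j : Fin N, fderiv ℝ (b j) phat (Pi.single i 1) = α) ∧
      (((∀ phat ∈ Set.Icc (0 : Fin N → ℝ) 1,
          fderiv ℝ (b i) phat (Pi.single i 1) < deriv (c i) (phat i)) ∧
        (∀ phat ∈ Set.Icc (0 : Fin N → ℝ) 1,
          ∑ j : Fin N, fderiv ℝ (b j) phat (Pi.single i 1) ≥ deriv (c i) (phat i)) ∧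
        ∑ j : Fin N, fderiv ℝ (b j) (0 : Fin N → ℝ) (Pi.single i 1) > deriv (c i) 0)
       ↔ (1 < α ∧ α < d i / (ε * z i))) := by
  intro i
  have hdpos : ∀ j, (0 : ℝ) < d j := fun j => lt_of_lt_of_le two_pos (hd2 j)
  have hdne : ∀ j, d j ≠ 0 := fun j => (hdpos j).ne'
  -- rewrite each b j as a single linear sum
  set W : Fin N → Fin N → ℝ := fun j k =>
    ε * α * (∑ m : Fin N, (A m j / d m) * (A k m / d k)) +
      (1 - ε) * α * (if k = j then 0 else A k j / (d k - 1)) with hW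
  have hbW : ∀ j, b j = fun p => ∑ k : Fin N, W j k * p k := by
    intro j
    rw [hb]
    funext p
    rw [hW]
    rw [Finset.sum_congr rfl (fun k _ => add_mul _ _ _), Finset.sum_add_distrib]
    congr 1
    · rw [Finset.mul_sum]
      simp_rw [Finset.mul_sum]
      rw [Finset.sum_comm]
      refine Finset.sum_congr rfl fun k _ => ?_
      rw [Finset.sum_mul]
      refine Finset.sum_congr rfl fun m _ => ?_
      ring
    · symm
      have he := Finset.sum_erase (Finset.univ)
        (f := fun x => ((1 - ε) * α * if x = j then 0 else A x j / (d x - 1)) * p x)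
        (a := j) (by simp)
      rw [← he, Finset.mul_sum]
      refine Finset.sum_congr rfl fun k hk => ?_
      simp only [if_neg (Finset.ne_of_mem_erase hk)]
      ring
  have hder : ∀ j phat, fderiv ℝ (b j) phat (Pi.single i 1) = W j i := by
    intro j phat
    rw [hbW j]
    exact fderiv_linsum _ _ _
  -- value of W i i
  have key1 : W i i = ε * α * z i / d i := by
    simp only [hW, eq_self_iff_true, if_true, mul_zero, add_zero]
    have hterm : ∀ m : Fin N, (A m i / d m) * (A i m / d i) = (A m i / d m) * (1 / d i) := by
      intro m
      rw [hAsymm i m]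
      rcases hA01 m i with h | h <;> rw [h] <;> ring
    rw [Finset.sum_congr rfl fun m _ => hterm m, ← Finset.sum_mul, ← hz i]
    ring
  -- value of ∑ j, W j i
  have key2 : ∑ j : Fin N, W j i = α := by
    rw [hW]
    rw [Finset.sum_add_distrib]
    have h1 : ∑ j : Fin N, ε * α * (∑ m : Fin N, (A m j / d m) * (A i m / d i)) = ε * α := by
      rw [← Finset.mul_sum, Finset.sum_comm]
      have hm : ∀ m : Fin N, ∑ j : Fin N, (A m j / d m) * (A i m / d i) = A i m / d i := by
        intro m
        rw [← Finset.sum_mul, ← Finset.sum_div, ← hd m, div_self (hdne m), one_mul]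
      rw [Finset.sum_congr rfl fun m _ => hm m, ← Finset.sum_div, ← hd i,
        div_self (hdne i), mul_one]
    have h2 : ∑ j : Fin N, (1 - ε) * α * (if i = j then 0 else A i j / (d i - 1))
        = (1 - ε) * α := by
      have he := Finset.sum_erase (Finset.univ)
        (f := fun j => (1 - ε) * α * (if i = j then 0 else A i j / (d i - 1)))
        (a := i) (by simp)
      rw [← he]
      have : ∀ j ∈ Finset.univ.erase i,
          (1 - ε) * α * (if i = j then 0 else A i j / (d i - 1))
            = (1 - ε) * α * (A i j / (d i - 1)) := by
        intro j hj
        rw [if_neg (Ne.symm (Finset.ne_of_mem_erase hj))]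
      rw [Finset.sum_congr rfl this, ← Finset.mul_sum, ← Finset.sum_div]
      have hsum : ∑ j ∈ Finset.univ.erase i, A i j = d i - 1 := by
        have h := Finset.add_sum_erase Finset.univ (fun j => A i j) (Finset.mem_univ i)
        simp only [hAdiag] at h
        rw [← hd i] at h
        linarith
      rw [hsum, div_self (by have := hd2 i; intro h; linarith [sub_eq_zero.mp h] : d i - 1 ≠ 0),
        mul_one]
    rw [h1, h2]
    ring
  -- derivative of cost
  have hcder : ∀ x : ℝ, deriv (c i) x = 1 := by
    intro x
    rw [hc]
    simp
  -- positivity of z i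
  have hzpos : 0 < z i := by
    rw [hz]
    refine Finset.sum_pos' (fun j _ => ?_) ⟨i, Finset.mem_univ i, ?_⟩
    · rcases hA01 j i with h | h <;> rw [h]
      · simp
      · exact le_of_lt (div_pos one_pos (hdpos j))
    · rw [hAdiag i]
      exact div_pos one_pos (hdpos i)
  have hεz : 0 < ε * z i := mul_pos hε hzpos
  have h0mem : (0 : Fin N → ℝ) ∈ Set.Icc (0 : Fin N → ℝ) 1 := ⟨le_refl _, zero_le_one⟩
  have hsumder : ∀ phat : Fin N → ℝ,
      ∑ j : Fin N, fderiv ℝ (b j) phat (Pi.single i 1) = α := by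
    intro phat
    rw [Finset.sum_congr rfl fun j _ => hder j phat]
    exact key2
  -- the equivalence of the first inequality
  have hiff : ε * α * z i / d i < 1 ↔ α < d i / (ε * z i) := by
    rw [div_lt_one (hdpos i), lt_div_iff₀ hεz]
    constructor <;> intro h <;> nlinarith
  constructor
  · intro phat _
    exact ⟨by rw [hder i phat, key1], hsumder phat⟩
  · constructor
    · rintro ⟨h1, h2, h3⟩
      have hA : (1 : ℝ) < α := by
        rw [hsumder 0, hcder 0] at h3
        exact h3
      refine ⟨hA, ?_⟩
      have := h1 0 h0mem
      rw [hder i 0, key1, hcder] at this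
      exact hiff.mp this
    · rintro ⟨h1, h2⟩
      refine ⟨fun phat _ => ?_, fun phat _ => ?_, ?_⟩
      · rw [hder i phat, key1, hcder]
        exact hiff.mpr h2
      · rw [hsumder phat, hcder]
        exact h1.le
      · rw [hsumder 0, hcder]
        exact h1
end

section
/- Consider the coupled public-goods–donation payoff y_i(p) with defector set D ⊂ {1,…,N}, and let s_i^{∖D} = ε Σ_j (A_{ji}/d_j) Σ_{k∉D} (A_{kj}/d_k) + (1 − ε) Σ_{k∉D, k≠i} (A_{ki}/(d_k−1)). If α s_i^{∖D} > 1 for every i ∉ D, then y_i(1_{∖D}) > 0 for every i ∉ D, and consequently 1_{∖D} is an asymptotically stable equilibrium, relative to K = { p ∈ [0,1]^N : p_i = 0 for all i ∈ D }, of the dynamics ṗ_i = p_i (1 − p_i) y_i(p) for i ∉ D. -/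
/-!
At the full-cooperation vertex `1_{∖D}` the benefit collapses to `α s_i`, so the payoff of every
cooperator is `α s_i - 1 > 0`. The payoffs are continuous, hence bounded below by some `δ > 0` on
a small neighbourhood `{q ∈ K | q_k > 1 - ρ for k ∉ D}`. There every cooperator's `p_k` is
nondecreasing, so the neighbourhood is invariant, and `1 - p_k` is forced down at rate at least
`(1 - ρ) δ (1 - p_k)`, so every `p_k` tends to `1`.
-/

open Filter Topology Set

theorem mul_sub_le_sub_of_hasDerivWithinAt_Ici {f f' : ℝ → ℝ} {m a b : ℝ}
    (hf : ∀ t ∈ Ici (0 : ℝ), HasDerivWithinAt f (f' t) (Ici 0) t) (ha : 0 ≤ a) (hab : a ≤ b)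
    (hm : ∀ t ∈ Ioo a b, m ≤ f' t) : m * (b - a) ≤ f b - f a := by
  have hderiv : ∀ t ∈ Ioo a b, HasDerivAt f (f' t) t := fun t ht =>
    (hf t (ha.trans ht.1.le)).hasDerivAt (Ici_mem_nhds (ha.trans_lt ht.1))
  refine (convex_Icc a b).mul_sub_le_image_sub_of_le_deriv
    (fun t ht => (hf t (ha.trans ht.1)).continuousWithinAt.mono fun u hu => ha.trans hu.1)
    ?_ ?_ a (left_mem_Icc.2 hab) b (right_mem_Icc.2 hab) hab
  · rw [interior_Icc]
    exact fun t ht => (hderiv t ht).differentiableAt.differentiableWithinAt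
  · rw [interior_Icc]
    exact fun t ht => (hderiv t ht).deriv ▸ hm t ht

theorem exists_gt_of_pos_le_hasDerivWithinAt_Ici {f f' : ℝ → ℝ} {m : ℝ} (hm : 0 < m)
    (hf : ∀ t ∈ Ici (0 : ℝ), HasDerivWithinAt f (f' t) (Ici 0) t)
    (hf' : ∀ t ∈ Ioi (0 : ℝ), m ≤ f' t) (c : ℝ) : ∃ t ≥ 0, c < f t := by
  have hT : 0 ≤ (|c - f 0| + 1) / m := by positivity
  refine ⟨_, hT, ?_⟩
  have hgrowth := mul_sub_le_sub_of_hasDerivWithinAt_Ici hf le_rfl hT fun t ht => hf' t ht.1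
  rw [sub_zero, mul_div_cancel₀ _ hm.ne'] at hgrowth
  linarith [le_abs_self (c - f 0)]

variable {ι : Type*}

def defectorFace (D : Finset ι) : Set (ι → ℝ) :=
  {q | q ∈ Icc 0 1 ∧ ∀ i ∈ D, q i = 0}

def fullCooperation [DecidableEq ι] (D : Finset ι) : ι → ℝ :=
  fun k => if k ∈ D then 0 else 1

def nearFullCooperation (D : Finset ι) (ρ : ℝ) : Set (ι → ℝ) :=
  {q | q ∈ defectorFace D ∧ ∀ k ∉ D, 1 - ρ < q k}

theorem sum_mul_fullCooperation [DecidableEq ι] (D S : Finset ι) (f : ι → ℝ) :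
    ∑ k ∈ S, f k * fullCooperation D k = ∑ k ∈ S \ D, f k := by
  simp [fullCooperation, Finset.sdiff_eq_filter, Finset.sum_filter]

theorem nearFullCooperation_eq_ball_inter [Fintype ι] [DecidableEq ι] {D : Finset ι} {ρ : ℝ}
    (hρ : 0 < ρ) :
    nearFullCooperation D ρ = Metric.ball (fullCooperation D) ρ ∩ defectorFace D := by
  ext q
  simp only [nearFullCooperation, mem_ofPred_eq, mem_inter_iff, Metric.mem_ball,
    dist_pi_lt_iff hρ, Real.dist_eq, fullCooperation]
  constructor
  · rintro ⟨hq, hcoop⟩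
    refine ⟨fun k => ?_, hq⟩
    by_cases hk : k ∈ D
    · simp [hk, hq.2 k hk, hρ]
    · have hq1 : q k ≤ 1 := hq.1.2 k
      rw [if_neg hk, abs_lt]
      constructor <;> linarith [hcoop k hk]
  · rintro ⟨hball, hq⟩
    refine ⟨hq, fun k hk => ?_⟩
    have := hball k
    rw [if_neg hk] at this
    linarith [neg_abs_le (q k - 1)]

theorem hasBasis_nearFullCooperation [Fintype ι] [DecidableEq ι] (D : Finset ι) :
    (𝓝[defectorFace D] fullCooperation D).HasBasis (fun ρ : ℝ => 0 < ρ ∧ ρ < 1)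
      (nearFullCooperation D) := by
  have hball := (Metric.nhdsWithin_basis_ball (s := defectorFace D) (x := fullCooperation D)).congr
    (fun _ => Iff.rfl) fun ρ hρ => (nearFullCooperation_eq_ball_inter (D := D) hρ).symm
  refine hball.restrict fun ρ hρ => ⟨min ρ (1 / 2), lt_min hρ one_half_pos,
    (min_le_right ρ _).trans_lt one_half_lt_one, fun q hq => ⟨hq.1, fun k hk => ?_⟩⟩
  linarith [hq.2 k hk, min_le_left ρ (1 / 2)]

structure IsReciprocityTrajectory (D : Finset ι) (y : ι → (ι → ℝ) → ℝ) (p : ℝ → ι → ℝ) :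
    Prop where
  mem_defectorFace : ∀ t ∈ Ici (0 : ℝ), p t ∈ defectorFace D
  hasDerivWithinAt : ∀ i ∉ D, ∀ t ∈ Ici (0 : ℝ),
    HasDerivWithinAt (fun u => p u i) (p t i * (1 - p t i) * y i (p t)) (Ici 0) t

namespace IsReciprocityTrajectory

variable {D : Finset ι} {y : ι → (ι → ℝ) → ℝ} {p : ℝ → ι → ℝ} {ρ δ : ℝ}

theorem growth_nonneg (hp : IsReciprocityTrajectory D y p) {t : ℝ} (ht : t ∈ Ici 0) {i : ι}
    (hy : 0 ≤ y i (p t)) : 0 ≤ p t i * (1 - p t i) * y i (p t) := by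
  have ⟨hp0, hp1⟩ := (hp.mem_defectorFace t ht).1
  exact mul_nonneg (mul_nonneg (hp0 i) (sub_nonneg.2 (hp1 i))) hy

/-- Before the first exit time `t₀` all growth rates are nonnegative, so at `t₀` every
cooperator is still above its initial level. -/
theorem mapsTo_nearFullCooperation [Finite ι] (hp : IsReciprocityTrajectory D y p)
    (hy : ∀ q ∈ nearFullCooperation D ρ, ∀ i ∉ D, 0 ≤ y i q)
    (h0 : p 0 ∈ nearFullCooperation D ρ) : MapsTo p (Ici 0) (nearFullCooperation D ρ) := by
  intro t ht
  by_contra hnot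
  set B := {t ∈ Ici (0 : ℝ) | ∃ k ∉ D, p t k ≤ 1 - ρ}
  have hBne : B.Nonempty := by
    simp only [nearFullCooperation, mem_ofPred_eq, hp.mem_defectorFace t ht, true_and,
      not_forall, not_lt] at hnot
    obtain ⟨k, hk, hle⟩ := hnot
    exact ⟨t, ht, k, hk, hle⟩
  have hBbdd : BddBelow B := ⟨0, fun t ht => ht.1⟩
  have hBclosed : IsClosed B := by
    have hB : B = ⋃ k ∈ {k | k ∉ D}, Ici 0 ∩ (fun t => p t k) ⁻¹' Iic (1 - ρ) := by
      ext t; simp [B]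
    rw [hB]
    refine (toFinite _).isClosed_biUnion fun k hk => ?_
    exact ContinuousOn.preimage_isClosed_of_isClosed
      (fun t ht => (hp.hasDerivWithinAt k hk t ht).continuousWithinAt) isClosed_Ici isClosed_Iic
  obtain ⟨ht₀, k, hk, hpk⟩ := hBclosed.csInf_mem hBne hBbdd
  have hbefore : ∀ t ∈ Ioo 0 (sInf B), p t ∈ nearFullCooperation D ρ := fun t ht =>
    ⟨hp.mem_defectorFace t ht.1.le, fun j hj =>
      not_le.1 fun hle => (csInf_le hBbdd ⟨ht.1.le, j, hj, hle⟩).not_gt ht.2⟩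
  have hmono := mul_sub_le_sub_of_hasDerivWithinAt_Ici (m := 0) (hp.hasDerivWithinAt k hk)
    le_rfl ht₀ fun t ht => hp.growth_nonneg ht.1.le (hy _ (hbefore t ht) k hk)
  linarith [h0.2 k hk]

theorem exists_one_sub_lt_apply (hp : IsReciprocityTrajectory D y p) (hρ : ρ < 1) (hδ : 0 < δ)
    (hy : ∀ q ∈ nearFullCooperation D ρ, ∀ i ∉ D, δ ≤ y i q)
    (hnear : MapsTo p (Ici 0) (nearFullCooperation D ρ)) {k : ι} (hk : k ∉ D) {e : ℝ}
    (he : 0 < e) : ∃ t ≥ 0, 1 - e < p t k := by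
  by_contra! hfar
  have hrate : ∀ t ∈ Ioi (0 : ℝ), (1 - ρ) * e * δ ≤ p t k * (1 - p t k) * y k (p t) := by
    intro t ht
    have hpk : 1 - ρ < p t k := (hnear (mem_Ici.2 ht.le)).2 k hk
    have hfar : e ≤ 1 - p t k := by linarith [hfar t ht.le]
    have hlogistic : (1 - ρ) * e ≤ p t k * (1 - p t k) :=
      mul_le_mul hpk.le hfar he.le (by linarith)
    calc (1 - ρ) * e * δ ≤ p t k * (1 - p t k) * δ := mul_le_mul_of_nonneg_right hlogistic hδ.le
      _ ≤ p t k * (1 - p t k) * y k (p t) :=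
        mul_le_mul_of_nonneg_left (hy _ (hnear (mem_Ici.2 ht.le)) k hk)
          ((mul_pos (sub_pos.2 hρ) he).le.trans hlogistic)
  obtain ⟨t, ht, hlt⟩ := exists_gt_of_pos_le_hasDerivWithinAt_Ici
    (mul_pos (mul_pos (sub_pos.2 hρ) he) hδ) (hp.hasDerivWithinAt k hk) hrate 1
  linarith [hfar t ht]

theorem tendsto_fullCooperation [DecidableEq ι] (hp : IsReciprocityTrajectory D y p)
    (hρ : ρ < 1) (hδ : 0 < δ) (hy : ∀ q ∈ nearFullCooperation D ρ, ∀ i ∉ D, δ ≤ y i q)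
    (hnear : MapsTo p (Ici 0) (nearFullCooperation D ρ)) :
    Tendsto p atTop (𝓝 (fullCooperation D)) := by
  refine tendsto_pi_nhds.2 fun k => ?_
  have hface : ∀ᶠ t in atTop, p t ∈ defectorFace D :=
    eventually_atTop.2 ⟨0, fun t ht => hp.mem_defectorFace t ht⟩
  by_cases hk : k ∈ D
  · rw [fullCooperation, if_pos hk]
    exact tendsto_const_nhds.congr' (hface.mono fun t ht => (ht.2 k hk).symm)
  rw [fullCooperation, if_neg hk]
  refine tendsto_order.2
    ⟨fun a ha => ?_, fun a ha => hface.mono fun t ht => (ht.1.2 k).trans_lt ha⟩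
  obtain ⟨T, hT, hlt⟩ := hp.exists_one_sub_lt_apply hρ hδ hy hnear hk (sub_pos.2 ha)
  refine eventually_atTop.2 ⟨T, fun t ht => ?_⟩
  have hmono := mul_sub_le_sub_of_hasDerivWithinAt_Ici (m := 0) (hp.hasDerivWithinAt k hk) hT ht
    fun u hu => hp.growth_nonneg (hT.trans hu.1.le)
      (hδ.le.trans (hy _ (hnear (hT.trans hu.1.le)) k hk))
  linarith

end IsReciprocityTrajectory

theorem fullCooperation_asymptoticallyStable [Fintype ι] [DecidableEq ι] {D : Finset ι}
    {y : ι → (ι → ℝ) → ℝ}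
    (hcont : ∀ i ∉ D, ContinuousWithinAt (y i) (defectorFace D) (fullCooperation D))
    (hpos : ∀ i ∉ D, 0 < y i (fullCooperation D)) :
    ∀ U ∈ 𝓝[defectorFace D] fullCooperation D, ∃ V ∈ 𝓝[defectorFace D] fullCooperation D,
      ∀ p : ℝ → ι → ℝ,
        (∀ t ∈ Ici (0 : ℝ), p t ∈ defectorFace D) →
        (∀ i ∉ D, ∀ t ∈ Ici (0 : ℝ),
          HasDerivWithinAt (fun u => p u i) (p t i * (1 - p t i) * y i (p t)) (Ici 0) t) →
        p 0 ∈ V →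
        (∀ t ∈ Ici (0 : ℝ), p t ∈ U) ∧ Tendsto p atTop (𝓝 (fullCooperation D)) := by
  intro U hU
  obtain ⟨δ, hδ, hδy⟩ : ∃ δ > 0, ∀ i ∉ D, δ < y i (fullCooperation D) :=
    (Eventually.and (self_mem_nhdsWithin (a := (0 : ℝ)) (s := Ioi 0)) (nhdsWithin_le_nhds
      ((toFinite {i | i ∉ D}).eventually_all.2 fun i hi => gt_mem_nhds (hpos i hi)))).exists
  have hnear : ∀ᶠ q in 𝓝[defectorFace D] fullCooperation D, q ∈ U ∧ ∀ i ∉ D, δ < y i q :=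
    Eventually.and hU ((toFinite {i | i ∉ D}).eventually_all.2 fun i hi =>
      (hcont i hi).eventually (lt_mem_nhds (hδy i hi)))
  obtain ⟨ρ, ⟨hρ0, hρ1⟩, hρ⟩ := (hasBasis_nearFullCooperation D).mem_iff.1 hnear
  refine ⟨_, (hasBasis_nearFullCooperation D).mem_of_mem ⟨hρ0, hρ1⟩, fun p hface hderiv h0 => ?_⟩
  have hp : IsReciprocityTrajectory D y p := ⟨hface, hderiv⟩
  have hy : ∀ q ∈ nearFullCooperation D ρ, ∀ i ∉ D, δ ≤ y i q :=
    fun q hq i hi => ((hρ hq).2 i hi).le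
  have hstay := hp.mapsTo_nearFullCooperation (fun q hq i hi => hδ.le.trans (hy q hq i hi)) h0
  exact ⟨fun t ht => (hρ (hstay ht)).1, hp.tendsto_fullCooperation hρ1 hδ hy hstay⟩

theorem public_goods_donation_full_cooperation_stable_general
    (N : ℕ)
    (A : Fin N → Fin N → ℝ)
    (d : Fin N → ℝ)
    (α ε : ℝ)
    (D : Finset (Fin N))
    (onesD : Fin N → ℝ) (honesD : onesD = fun k => if k ∈ D then 0 else 1)
    (s : Fin N → ℝ)
    (hs : ∀ i, s i = ε * ∑ j : Fin N, (A j i / d j) * ∑ k ∈ Dᶜ, A k j / d k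
        + (1 - ε) * ∑ k ∈ Dᶜ.erase i, A k i / (d k - 1))
    (b : Fin N → (Fin N → ℝ) → ℝ)
    (hb : ∀ i, b i = fun p =>
      ε * α * ∑ j : Fin N, (A j i / d j) * ∑ k : Fin N, (A k j / d k) * p k
        + (1 - ε) * α * ∑ k ∈ Finset.univ.erase i, (A k i / (d k - 1)) * p k)
    (y : Fin N → (Fin N → ℝ) → ℝ) (hy : ∀ i p, y i p = b i p - p i)
    (K : Set (Fin N → ℝ))
    (hK : K = {q : Fin N → ℝ | q ∈ Set.Icc (0 : Fin N → ℝ) 1 ∧ ∀ i ∈ D, q i = 0})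
    (hαs : ∀ i ∉ D, 1 < α * s i) :
    (∀ i ∉ D, 0 < y i onesD) ∧
    (∀ U ∈ 𝓝[K] onesD, ∃ V ∈ 𝓝[K] onesD,
      ∀ p : ℝ → Fin N → ℝ,
        (∀ t ∈ Set.Ici (0 : ℝ), p t ∈ K) →
        (∀ i ∉ D, ∀ t ∈ Set.Ici (0 : ℝ),
          HasDerivWithinAt (fun u => p u i)
            (p t i * (1 - p t i) * y i (p t)) (Set.Ici 0) t) →
        p 0 ∈ V →
        (∀ t ∈ Set.Ici (0 : ℝ), p t ∈ U) ∧ Tendsto p atTop (𝓝 onesD)) := by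
  obtain rfl : onesD = fullCooperation D := honesD
  obtain rfl : K = defectorFace D := hK
  have hbenefit : ∀ i, b i (fullCooperation D) = α * s i := fun i => by
    simp only [hb, hs, sum_mul_fullCooperation, Finset.compl_eq_univ_sdiff,
      Finset.erase_sdiff_comm]
    ring
  have hpayoff : ∀ i ∉ D, 0 < y i (fullCooperation D) := fun i hi => by
    rw [hy, hbenefit, fullCooperation, if_neg hi]
    linarith [hαs i hi]
  refine ⟨hpayoff, fullCooperation_asymptoticallyStable (fun i _ => ?_) hpayoff⟩
  rw [show y i = fun q => b i q - q i from funext (hy i), hb]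
  fun_prop

/-- For the coupled public-goods–donation payoff `y i p = b i p - p i` with defector set `D`
and neighborhood importance index `s i`, if `α * s i > 1` for every `i ∉ D`, then
`y i (1_{∖D}) > 0` for every `i ∉ D`, and the point `1_{∖D}` is an asymptotically stable
equilibrium relative to `K = {p ∈ [0,1]^N : p i = 0 for i ∈ D}` of the dynamics
`ṗ i = p i (1 - p i) y i p` for `i ∉ D`. -/
theorem public_goods_donation_full_cooperation_stable
    (N : ℕ)
    (A : Fin N → Fin N → ℝ) (hA01 : ∀ i j, A i j = 0 ∨ A i j = 1)
    (hAsymm : ∀ i j, A i j = A j i) (hAdiag : ∀ i, A i i = 1)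
    (d : Fin N → ℝ) (hd : ∀ i, d i = ∑ j : Fin N, A i j) (hd2 : ∀ i, 2 ≤ d i)
    (α ε : ℝ) (hα : 0 < α) (hε : 0 < ε) (hε1 : ε ≤ 1)
    (D : Finset (Fin N))
    (onesD : Fin N → ℝ) (honesD : onesD = fun k => if k ∈ D then 0 else 1)
    (s : Fin N → ℝ)
    (hs : ∀ i, s i = ε * ∑ j : Fin N, (A j i / d j) * ∑ k ∈ Dᶜ, A k j / d k
        + (1 - ε) * ∑ k ∈ Dᶜ.erase i, A k i / (d k - 1))
    (b : Fin N → (Fin N → ℝ) → ℝ)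
    (hb : ∀ i, b i = fun p =>
      ε * α * ∑ j : Fin N, (A j i / d j) * ∑ k : Fin N, (A k j / d k) * p k
        + (1 - ε) * α * ∑ k ∈ Finset.univ.erase i, (A k i / (d k - 1)) * p k)
    (y : Fin N → (Fin N → ℝ) → ℝ) (hy : ∀ i p, y i p = b i p - p i)
    (K : Set (Fin N → ℝ))
    (hK : K = {q : Fin N → ℝ | q ∈ Set.Icc (0 : Fin N → ℝ) 1 ∧ ∀ i ∈ D, q i = 0})
    (hαs : ∀ i ∉ D, 1 < α * s i) :
    (∀ i ∉ D, 0 < y i onesD) ∧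
    (∀ U ∈ 𝓝[K] onesD, ∃ V ∈ 𝓝[K] onesD,
      ∀ p : ℝ → Fin N → ℝ,
        (∀ t ∈ Set.Ici (0 : ℝ), p t ∈ K) →
        (∀ i ∉ D, ∀ t ∈ Set.Ici (0 : ℝ),
          HasDerivWithinAt (fun u => p u i)
            (p t i * (1 - p t i) * y i (p t)) (Set.Ici 0) t) →
        p 0 ∈ V →
        (∀ t ∈ Set.Ici (0 : ℝ), p t ∈ U) ∧ Tendsto p atTop (𝓝 onesD)) :=
  public_goods_donation_full_cooperation_stable_general N A d α ε D onesD honesD s hs b hb y hy K hK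
    hαs
end
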